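/- arXiv:2504.10283 — 3 statements merged into one kernel-verified Lean document; each statement's English description precedes it below -/
import Mathlib

section
/- Let μ be a positive probability vector in ℝⁿ and a ∈ ℝⁿ a tangent vector with ∑_i a_i = 0. Then the curve γ(t) = softmax(log μ + t·a/μ) (componentwise division) satisfies the geodesic equation γ̈ − (γ̇²/γ − γ ∑_j γ̇_j²/γ_j) = 0 componentwise, where squares and divisions are componentwise. -/
/-!
Write `θ = log μ` and `c = a / μ`, so that `γ t = softmax (θ + t c)`. Differentiating the softmax
gives the replicator equation `γ̇ᵢ = γᵢ (cᵢ - m)` with `m = ∑ⱼ γⱼ cⱼ`, and then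
`ṁ = ∑ⱼ γⱼ cⱼ (cⱼ - m) = ∑ⱼ γⱼ (cⱼ - m)² = ∑ⱼ γ̇ⱼ² / γⱼ` because `∑ⱼ γⱼ = 1`. Hence
`γ̈ₖ = γₖ (cₖ - m)² - γₖ ṁ = γ̇ₖ² / γₖ - γₖ ∑ⱼ γ̇ⱼ² / γⱼ`.
-/

open Finset Real

variable {ι : Type*} [Fintype ι]

noncomputable def softmax (x : ι → ℝ) (i : ι) : ℝ := exp (x i) / ∑ j, exp (x j)

theorem sum_exp_pos (x : ι → ℝ) (i : ι) : 0 < ∑ j, exp (x j) :=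
  sum_pos (fun j _ => exp_pos (x j)) ⟨i, mem_univ i⟩

theorem sum_softmax [Nonempty ι] (x : ι → ℝ) : ∑ i, softmax x i = 1 := by
  obtain ⟨i⟩ := ‹Nonempty ι›
  simp only [softmax, ← sum_div]
  exact div_self (sum_exp_pos x i).ne'

theorem hasDerivAt_softmax_line (θ c : ι → ℝ) (t : ℝ) (i : ι) :
    HasDerivAt (fun s => softmax (fun j => θ j + s * c j) i)
      (softmax (fun j => θ j + t * c j) i *
        (c i - ∑ j, softmax (fun j => θ j + t * c j) j * c j)) t := by
  have hexp : ∀ j, HasDerivAt (fun s => exp (θ j + s * c j)) (exp (θ j + t * c j) * c j) t :=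
    fun j => by simpa using ((hasDerivAt_mul_const (c j)).const_add (θ j)).exp
  have hZ := sum_exp_pos (fun j => θ j + t * c j) i
  unfold softmax
  refine ((hexp i).fun_div (HasDerivAt.fun_sum fun j _ => hexp j) hZ.ne').congr_deriv ?_
  simp only [div_mul_eq_mul_div, ← sum_div]
  field_simp

theorem sq_mul_div_self (x y : ℝ) : (x * y) ^ 2 / x = x * y ^ 2 := by
  rcases eq_or_ne x 0 with rfl | hx
  · simp
  · field_simp

theorem sum_mul_mul_sub_mean {p c : ι → ℝ} (hp : ∑ i, p i = 1) :
    ∑ i, p i * (c i - ∑ j, p j * c j) * c i = ∑ i, p i * (c i - ∑ j, p j * c j) ^ 2 := by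
  set m := ∑ j, p j * c j
  have hcentered : ∑ i, p i * (c i - m) = 0 := by
    simp only [mul_sub, sum_sub_distrib, ← sum_mul, hp, one_mul, m, sub_self]
  calc ∑ i, p i * (c i - m) * c i = ∑ i, (p i * (c i - m) ^ 2 + p i * (c i - m) * m) :=
        sum_congr rfl fun i _ => by ring
    _ = ∑ i, p i * (c i - m) ^ 2 := by rw [sum_add_distrib, ← sum_mul, hcentered, zero_mul, add_zero]

theorem geodesic_equation_of_replicator {p : ℝ → ι → ℝ} {c : ι → ℝ}
    (hp : ∀ t i, HasDerivAt (fun s => p s i) (p t i * (c i - ∑ j, p t j * c j)) t)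
    (t : ℝ) (hsum : ∑ i, p t i = 1) (k : ι) :
    deriv (deriv fun s => p s k) t =
      (deriv (fun s => p s k) t) ^ 2 / p t k -
        p t k * ∑ j, (deriv (fun s => p s j) t) ^ 2 / p t j := by
  set m : ℝ → ℝ := fun s => ∑ j, p s j * c j
  have hderiv : ∀ j, deriv (fun s => p s j) = fun s => p s j * (c j - m s) :=
    fun j => funext fun s => (hp s j).deriv
  have hm : HasDerivAt m (∑ j, p t j * (c j - m t) * c j) t :=
    HasDerivAt.fun_sum fun j _ => (hp t j).mul_const (c j)
  have hsecond : HasDerivAt (fun s => p s k * (c k - m s))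
      (p t k * (c k - m t) * (c k - m t) - p t k * ∑ j, p t j * (c j - m t) * c j) t := by
    simpa only [mul_neg, ← sub_eq_add_neg] using (hp t k).fun_mul (hm.const_sub (c k))
  rw [hderiv k, hsecond.deriv]
  simp only [hderiv, sq_mul_div_self]
  rw [sum_mul_mul_sub_mean hsum]
  ring

theorem e_geodesic_equation_general (n : ℕ) (μ : Fin n → ℝ) (a : Fin n → ℝ)
    (γ : ℝ → Fin n → ℝ)
    (hγ : ∀ t i, γ t i =
      Real.exp (Real.log (μ i) + t * a i / μ i) /
        ∑ j, Real.exp (Real.log (μ j) + t * a j / μ j)) :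
    ∀ t k, deriv (deriv (fun s => γ s k)) t =
      (deriv (fun s => γ s k) t) ^ 2 / γ t k -
        γ t k * ∑ j, (deriv (fun s => γ s j) t) ^ 2 / γ t j := by
  have hγ_softmax : γ = fun t => softmax fun j => log (μ j) + t * (a j / μ j) := by
    funext t i
    simp only [hγ, softmax, mul_div_assoc]
  intro t k
  have : Nonempty (Fin n) := ⟨k⟩
  subst hγ_softmax
  exact geodesic_equation_of_replicator (hasDerivAt_softmax_line _ _) t (sum_softmax _) k

/-- The curve `γ(t) = softmax(log μ + t·a/μ)` satisfies the α = 1 geodesic equation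
`γ̈ₖ = γ̇ₖ²/γₖ − γₖ ∑ⱼ γ̇ⱼ²/γⱼ` componentwise. -/
theorem e_geodesic_equation (n : ℕ) (μ : Fin n → ℝ) (a : Fin n → ℝ)
    (hμpos : ∀ i, 0 < μ i) (hμsum : ∑ i, μ i = 1) (hasum : ∑ i, a i = 0)
    (γ : ℝ → Fin n → ℝ)
    (hγ : ∀ t i, γ t i =
      Real.exp (Real.log (μ i) + t * a i / μ i) /
        ∑ j, Real.exp (Real.log (μ j) + t * a j / μ j)) :
    ∀ t k, deriv (deriv (fun s => γ s k)) t =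
      (deriv (fun s => γ s k) t) ^ 2 / γ t k -
        γ t k * ∑ j, (deriv (fun s => γ s j) t) ^ 2 / γ t j :=
  e_geodesic_equation_general n μ a γ hγ
end

section
/- Fix a unit vector x on the positive orthant of the unit sphere in ℝⁿ and a tangent vector u with ⟨x,u⟩ = 0 and ‖u‖₂ ≠ 0. Then the reparameterization τ(t) = tan(‖u‖₂ t)/‖u‖₂ satisfies the ODE τ̈(t) = 2 (∑_i (x_i + τ u_i) u_i)/‖x + τ u‖₂² · τ̇(t)² with τ(0) = 0 and τ̇(0) = 1, and the normalized curve (x + τ(t)u)/‖x + τ(t)u‖₂ equals the spherical geodesic x cos(‖u‖₂ t) + (u/‖u‖₂) sin(‖u‖₂ t). -/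
/-! Since `x ⊥ u` and `‖x‖ = 1`, one has `⟨x + τu, u⟩ = τ‖u‖²` and `‖x + τu‖² = 1 + τ²‖u‖²`.
With `c = ‖u‖`, the function `τ(t) = tan(ct)/c` solves the Riccati equation `τ' = 1 + c²τ²`;
differentiating once more gives `τ'' = 2c²ττ' = 2c²τ/(1 + c²τ²) · τ'²`, which is the claimed
equation. Finally `√(1 + tan² θ) = 1/cos θ` for `cos θ > 0`, which turns the normalized curve into
`x cos(ct) + (u/c) sin(ct)`. -/

open Filter Topology Real

section Orthogonal

variable {ι : Type*} [Fintype ι] {x u : ι → ℝ}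

lemma sum_add_mul_mul_eq_of_orthogonal (hxu : ∑ i, x i * u i = 0) (s : ℝ) :
    ∑ i, (x i + s * u i) * u i = s * ∑ i, u i ^ 2 := by
  simp only [add_mul, Finset.sum_add_distrib, hxu, Finset.mul_sum]
  ring_nf

lemma sum_add_mul_sq_eq_of_orthogonal (hxu : ∑ i, x i * u i = 0) (s : ℝ) :
    ∑ i, (x i + s * u i) ^ 2 = ∑ i, x i ^ 2 + s ^ 2 * ∑ i, u i ^ 2 := by
  have hexpand : ∀ i, (x i + s * u i) ^ 2 = x i ^ 2 + 2 * s * (x i * u i) + s ^ 2 * u i ^ 2 :=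
    fun i => by ring
  simp only [hexpand, Finset.sum_add_distrib, ← Finset.mul_sum, hxu]
  ring

end Orthogonal

lemma deriv_deriv_of_riccati {τ : ℝ → ℝ} {k t : ℝ}
    (h : ∀ᶠ s in 𝓝 t, HasDerivAt τ (1 + k * τ s ^ 2) s) :
    deriv (deriv τ) t = 2 * (τ t * k) / (1 + τ t ^ 2 * k) * deriv τ t ^ 2 := by
  have hτ : HasDerivAt τ (1 + k * τ t ^ 2) t := h.self_of_nhds
  have hderiv : deriv τ =ᶠ[𝓝 t] fun s => 1 + k * τ s ^ 2 := h.mono fun s hs => hs.deriv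
  have hsecond : HasDerivAt (fun s => 1 + k * τ s ^ 2)
      (k * (2 * τ t * (1 + k * τ t ^ 2))) t := by
    simpa using ((hτ.pow 2).const_mul k).const_add 1
  rw [hderiv.deriv_eq, hsecond.deriv, hτ.deriv]
  -- if `1 + kτ² = 0` then `τ' t = 0`, so both sides vanish
  rcases eq_or_ne (1 + τ t ^ 2 * k) 0 with h0 | h0
  · rw [h0]
    linear_combination 2 * τ t * k * h0
  · field_simp

lemma hasDerivAt_tan_mul_div {c s : ℝ} (hc : c ≠ 0) (hcos : cos (c * s) ≠ 0) :
    HasDerivAt (fun r => tan (c * r) / c) (1 + c ^ 2 * (tan (c * s) / c) ^ 2) s := by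
  have hlin : HasDerivAt (fun r => c * r) c s := by simpa using (hasDerivAt_id s).const_mul c
  refine (((hasDerivAt_tan hcos).comp s hlin).div_const c).congr_deriv ?_
  rw [← inv_one_add_tan_sq hcos]
  field_simp

lemma add_tan_div_mul_div_sqrt_eq {θ c : ℝ} (hc : c ≠ 0) (hcos : 0 < cos θ) (a b : ℝ) :
    (a + tan θ / c * b) / √(1 + (tan θ / c) ^ 2 * c ^ 2) = a * cos θ + b / c * sin θ := by
  have hsq : (tan θ / c) ^ 2 * c ^ 2 = tan θ ^ 2 := by field_simp
  rw [hsq, add_div, ← tan_div_sqrt_one_add_tan_sq hcos, ← inv_sqrt_one_add_tan_sq hcos]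
  ring

theorem sphere_reparameterization_ivp_general (n : ℕ) (x u : Fin n → ℝ)
    (hx : ∑ i, x i ^ 2 = 1)
    (hxu : ∑ i, x i * u i = 0) (hu : Real.sqrt (∑ i, u i ^ 2) ≠ 0)
    (τ : ℝ → ℝ)
    (hτ : ∀ t, τ t = Real.tan (Real.sqrt (∑ i, u i ^ 2) * t) / Real.sqrt (∑ i, u i ^ 2)) :
    τ 0 = 0 ∧ deriv τ 0 = 1 ∧
      ∀ t : ℝ, |t| * Real.sqrt (∑ i, u i ^ 2) < Real.pi / 2 →
        (deriv (deriv τ) t =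
            2 * (∑ i, (x i + τ t * u i) * u i) / (∑ i, (x i + τ t * u i) ^ 2) *
              (deriv τ t) ^ 2) ∧
        (∀ i, (x i + τ t * u i) / Real.sqrt (∑ j, (x j + τ t * u j) ^ 2) =
            x i * Real.cos (Real.sqrt (∑ j, u j ^ 2) * t) +
              u i / Real.sqrt (∑ j, u j ^ 2) *
                Real.sin (Real.sqrt (∑ j, u j ^ 2) * t)) := by
  set c := √(∑ i, u i ^ 2)
  have hc2 : ∑ i, u i ^ 2 = c ^ 2 := (sq_sqrt (by positivity)).symm
  obtain rfl : τ = fun r => tan (c * r) / c := funext hτ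
  have hriccati : ∀ s, cos (c * s) ≠ 0 → HasDerivAt (fun r => tan (c * r) / c)
      (1 + c ^ 2 * (tan (c * s) / c) ^ 2) s := fun s => hasDerivAt_tan_mul_div hu
  refine ⟨by simp, by simpa using (hriccati 0 (by simp)).deriv, fun t ht => ?_⟩
  have hcos : 0 < cos (c * t) := by
    refine cos_pos_of_mem_Ioo (abs_lt.mp ?_)
    rwa [abs_mul, abs_of_nonneg (sqrt_nonneg _), mul_comm]
  have hcos_near : ∀ᶠ s in 𝓝 t, cos (c * s) ≠ 0 :=
    (continuous_cos.comp (continuous_const_mul c)).continuousAt.eventually_ne hcos.ne'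
  simp only [sum_add_mul_mul_eq_of_orthogonal hxu, sum_add_mul_sq_eq_of_orthogonal hxu, hx, hc2]
  exact ⟨deriv_deriv_of_riccati (hcos_near.mono hriccati),
    fun i => add_tan_div_mul_div_sqrt_eq hu hcos (x i) (u i)⟩

/-- The reparameterization `τ(t) = tan(‖u‖t)/‖u‖` satisfies the normalization ODE with
`τ(0) = 0`, `τ̇(0) = 1`, and the normalized curve `(x + τu)/‖x + τu‖₂` equals the
spherical geodesic `x cos(‖u‖t) + (u/‖u‖) sin(‖u‖t)`. -/
theorem sphere_reparameterization_ivp (n : ℕ) (x u : Fin n → ℝ)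
    (hxpos : ∀ i, 0 < x i) (hx : ∑ i, x i ^ 2 = 1)
    (hxu : ∑ i, x i * u i = 0) (hu : Real.sqrt (∑ i, u i ^ 2) ≠ 0)
    (τ : ℝ → ℝ)
    (hτ : ∀ t, τ t = Real.tan (Real.sqrt (∑ i, u i ^ 2) * t) / Real.sqrt (∑ i, u i ^ 2)) :
    τ 0 = 0 ∧ deriv τ 0 = 1 ∧
      ∀ t : ℝ, |t| * Real.sqrt (∑ i, u i ^ 2) < Real.pi / 2 →
        (deriv (deriv τ) t =
            2 * (∑ i, (x i + τ t * u i) * u i) / (∑ i, (x i + τ t * u i) ^ 2) *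
              (deriv τ t) ^ 2) ∧
        (∀ i, (x i + τ t * u i) / Real.sqrt (∑ j, (x j + τ t * u j) ^ 2) =
            x i * Real.cos (Real.sqrt (∑ j, u j ^ 2) * t) +
              u i / Real.sqrt (∑ j, u j ^ 2) *
                Real.sin (Real.sqrt (∑ j, u j ^ 2) * t)) :=
  sphere_reparameterization_ivp_general n x u hx hxu hu τ hτ
end

section
/- Let x, y be points on the positive orthant of the unit sphere in ℝⁿ with θ = arccos(⟨x,y⟩) ∈ (0, π/2). Then τ(t) = tan(tθ)/(sin θ + (1 − cos θ) tan(tθ)) satisfies τ(0) = 0, τ(1) = 1, and τ̇(0) = θ/sin θ, and the curve (x + τ(t)(y−x))/‖x + τ(t)(y−x)‖₂ equals the great-circle interpolation (x sin((1−t)θ) + y sin(tθ))/sin θ. -/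
/-!
Put `u = tθ` and `v = (1 - t)θ`. Clearing `cos u` from the definition of `τ` and using
`sin θ cos u - cos θ sin u = sin v` gives `τ(t) = sin u / (sin u + sin v)`, so
`x + τ(t)(y - x)` is a positive multiple of `x sin v + y sin u`. The latter has squared
length `sin² v + 2 sin u sin v cos θ + sin² u = sin² θ`, hence normalizing it is the same as
dividing it by `sin θ`.
-/

open Real Finset

noncomputable def sphereReparam (θ s : ℝ) : ℝ :=
  tan s / (sin θ + (1 - cos θ) * tan s)

theorem sphereReparam_zero (θ : ℝ) : sphereReparam θ 0 = 0 := by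
  simp [sphereReparam]

theorem sphereReparam_eq_sin_div {θ u : ℝ} (hu : cos u ≠ 0) :
    sphereReparam θ u = sin u / (sin u + sin (θ - u)) := by
  have hden : sin θ + (1 - cos θ) * tan u = (sin u + sin (θ - u)) / cos u := by
    rw [tan_eq_sin_div_cos, sin_sub]
    field_simp
    ring
  rw [sphereReparam, hden, tan_eq_sin_div_cos, div_div_div_cancel_right₀ hu]

theorem sphereReparam_self {θ : ℝ} (hs : sin θ ≠ 0) (hc : cos θ ≠ 0) :
    sphereReparam θ θ = 1 := by
  rw [sphereReparam_eq_sin_div hc, sub_self, sin_zero, add_zero, div_self hs]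

theorem hasDerivAt_sphereReparam_zero {θ : ℝ} (hs : sin θ ≠ 0) :
    HasDerivAt (sphereReparam θ) (1 / sin θ) 0 := by
  have htan : HasDerivAt tan 1 0 := by
    simpa using hasDerivAt_tan (x := 0) (by simp)
  have hden : HasDerivAt (fun s => sin θ + (1 - cos θ) * tan s) ((1 - cos θ) * 1) 0 :=
    (htan.const_mul _).const_add _
  refine (htan.div hden (by simpa using hs)).congr_deriv ?_
  simp only [tan_zero, mul_zero, add_zero, zero_mul, sub_zero, one_mul]
  field_simp

theorem sum_mul_add_mul_sq {ι : Type*} [Fintype ι] (x y : ι → ℝ) (a b : ℝ) :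
    ∑ i, (a * x i + b * y i) ^ 2 =
      a ^ 2 * ∑ i, x i ^ 2 + 2 * a * b * ∑ i, x i * y i + b ^ 2 * ∑ i, y i ^ 2 := by
  simp only [mul_sum, ← sum_add_distrib]
  exact sum_congr rfl fun i _ => by ring

theorem sin_sq_add_two_mul_sin_mul_sin_mul_cos_add_sin_sq (u v : ℝ) :
    sin v ^ 2 + 2 * sin v * sin u * cos (u + v) + sin u ^ 2 = sin (u + v) ^ 2 := by
  rw [sin_add, cos_add]
  linear_combination (-sin v ^ 2) * sin_sq_add_cos_sq u + (-sin u ^ 2) * sin_sq_add_cos_sq v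

theorem sin_add_le_sin_add_sin {u v : ℝ} (hu : 0 ≤ sin u) (hv : 0 ≤ sin v) :
    sin (u + v) ≤ sin u + sin v := by
  rw [sin_add]
  gcongr
  · exact mul_le_of_le_one_right hu (cos_le_one v)
  · exact mul_le_of_le_one_left hv (cos_le_one u)

theorem normalize_lineMap_eq_slerp {ι : Type*} [Fintype ι] {x y : ι → ℝ}
    (hx : ∑ i, x i ^ 2 = 1) (hy : ∑ i, y i ^ 2 = 1) {u v : ℝ}
    (hxy : ∑ i, x i * y i = cos (u + v)) (hu : 0 ≤ sin u) (hv : 0 ≤ sin v)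
    (huv : 0 < sin (u + v)) (i : ι) :
    (x i + sin u / (sin u + sin v) * (y i - x i)) /
        sqrt (∑ j, (x j + sin u / (sin u + sin v) * (y j - x j)) ^ 2) =
      (x i * sin v + y i * sin u) / sin (u + v) := by
  set w := sin u + sin v
  have hw : 0 < w := huv.trans_le (sin_add_le_sin_add_sin hu hv)
  have hpoint : ∀ j, x j + sin u / w * (y j - x j) = (sin v * x j + sin u * y j) / w := by
    intro j
    field_simp
    ring
  have hnorm : ∑ j, (sin v * x j + sin u * y j) ^ 2 = sin (u + v) ^ 2 := by
    rw [sum_mul_add_mul_sq, hx, hy, hxy, mul_one, mul_one,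
      sin_sq_add_two_mul_sin_mul_sin_mul_cos_add_sin_sq]
  have hsq : ∑ j, ((sin v * x j + sin u * y j) / w) ^ 2 = (sin (u + v) / w) ^ 2 := by
    simp only [div_pow, ← sum_div, hnorm]
  simp only [hpoint, hsq]
  rw [sqrt_sq (div_pos huv hw).le, div_div_div_cancel_right₀ hw.ne']
  ring

theorem sum_mul_mem_Icc_of_sum_sq_eq_one {ι : Type*} [Fintype ι] {x y : ι → ℝ}
    (hx : ∑ i, x i ^ 2 = 1) (hy : ∑ i, y i ^ 2 = 1) :
    ∑ i, x i * y i ∈ Set.Icc (-1) 1 := by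
  have hcs := sum_mul_sq_le_sq_mul_sq univ x y
  rw [hx, hy, one_mul, sq_le_one_iff_abs_le_one] at hcs
  exact abs_le.mp hcs

theorem sphere_reparameterization_bvp_general (n : ℕ) (x y : Fin n → ℝ)
    (hx : ∑ i, x i ^ 2 = 1) (hy : ∑ i, y i ^ 2 = 1)
    (θ : ℝ) (hθdef : θ = Real.arccos (∑ i, x i * y i))
    (hθ : θ ∈ Set.Ioo 0 (Real.pi / 2))
    (τ : ℝ → ℝ)
    (hτ : ∀ t, τ t = Real.tan (t * θ) /
      (Real.sin θ + (1 - Real.cos θ) * Real.tan (t * θ))) :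
    τ 0 = 0 ∧ τ 1 = 1 ∧ deriv τ 0 = θ / Real.sin θ ∧
      ∀ t ∈ Set.Icc (0 : ℝ) 1, ∀ i,
        (x i + τ t * (y i - x i)) /
            Real.sqrt (∑ j, (x j + τ t * (y j - x j)) ^ 2) =
          (x i * Real.sin ((1 - t) * θ) + y i * Real.sin (t * θ)) / Real.sin θ := by
  obtain ⟨hθ0, hθπ⟩ := hθ
  have hsin : 0 < sin θ := sin_pos_of_pos_of_lt_pi hθ0 (by linarith [pi_pos])
  have hcos : 0 < cos θ := cos_pos_of_mem_Ioo ⟨by linarith [pi_pos], hθπ⟩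
  obtain ⟨hxy₁, hxy₂⟩ := sum_mul_mem_Icc_of_sum_sq_eq_one hx hy
  have hxy : ∑ i, x i * y i = cos θ := by rw [hθdef, cos_arccos hxy₁ hxy₂]
  obtain rfl : τ = fun t => sphereReparam θ (t * θ) := funext hτ
  refine ⟨by simp [sphereReparam_zero], by simp [sphereReparam_self hsin.ne' hcos.ne'], ?_, ?_⟩
  · have hderiv := (hasDerivAt_sphereReparam_zero hsin.ne').comp_of_eq 0
      (hasDerivAt_mul_const θ) (zero_mul θ).symm
    exact hderiv.deriv.trans (by ring)
  · rintro t ⟨ht0, ht1⟩ i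
    have hu : cos (t * θ) ≠ 0 :=
      (cos_pos_of_mem_Ioo ⟨by nlinarith [pi_pos], by nlinarith⟩).ne'
    have hsplit : t * θ + (1 - t) * θ = θ := by ring
    have hsplit' : θ - t * θ = (1 - t) * θ := by ring
    simp only [sphereReparam_eq_sin_div hu, hsplit']
    rw [normalize_lineMap_eq_slerp hx hy (by rwa [hsplit])
      (sin_nonneg_of_nonneg_of_le_pi (by positivity) (by nlinarith [pi_pos]))
      (sin_nonneg_of_nonneg_of_le_pi (by nlinarith) (by nlinarith [pi_pos]))
      (by rwa [hsplit]), hsplit]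

/-- The boundary-value reparameterization `τ(t) = tan(tθ)/(sin θ + (1 − cos θ)tan(tθ))`
satisfies `τ(0) = 0`, `τ(1) = 1`, `τ̇(0) = θ/sin θ`, and the normalized linear
interpolation equals the great-circle interpolation. -/
theorem sphere_reparameterization_bvp (n : ℕ) (x y : Fin n → ℝ)
    (hxpos : ∀ i, 0 < x i) (hypos : ∀ i, 0 < y i)
    (hx : ∑ i, x i ^ 2 = 1) (hy : ∑ i, y i ^ 2 = 1)
    (θ : ℝ) (hθdef : θ = Real.arccos (∑ i, x i * y i))
    (hθ : θ ∈ Set.Ioo 0 (Real.pi / 2))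
    (τ : ℝ → ℝ)
    (hτ : ∀ t, τ t = Real.tan (t * θ) /
      (Real.sin θ + (1 - Real.cos θ) * Real.tan (t * θ))) :
    τ 0 = 0 ∧ τ 1 = 1 ∧ deriv τ 0 = θ / Real.sin θ ∧
      ∀ t ∈ Set.Icc (0 : ℝ) 1, ∀ i,
        (x i + τ t * (y i - x i)) /
            Real.sqrt (∑ j, (x j + τ t * (y j - x j)) ^ 2) =
          (x i * Real.sin ((1 - t) * θ) + y i * Real.sin (t * θ)) / Real.sin θ :=
  sphere_reparameterization_bvp_general n x y hx hy θ hθdef hθ τ hτ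
end
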